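/- Strong necessitation for S4_h: if ⋀_{i=1}^{k} □_{m_i} A_i ⊢_{S4_h} A and m_i ≤ n for all i (and n > r(A)), then ⋀_{i=1}^{k} □_{m_i} A_i ⊢_{S4_h} □n A. -/

import Mathlib

/-- Poly-modal formulas with modalities `□n` for `n : ℕ`. -/
inductive Fm : Type
  | atom : ℕ → Fm
  | bot  : Fm
  | and  : Fm → Fm → Fm
  | or   : Fm → Fm → Fm
  | imp  : Fm → Fm → Fm
  | neg  : Fm → Fm
  | box  : ℕ → Fm → Fm
  deriving DecidableEq

def Fm.top : Fm := Fm.neg Fm.bot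

/-- `i` occurs as a modality index in the formula. -/
def occursBox (i : ℕ) : Fm → Prop
  | .atom _ => False
  | .bot => False
  | .and A B => occursBox i A ∨ occursBox i B
  | .or A B => occursBox i A ∨ occursBox i B
  | .imp A B => occursBox i A ∨ occursBox i B
  | .neg A => occursBox i A
  | .box n A => i = n ∨ occursBox i A

/-- `n` is strictly greater than every modality index occurring in `A`
    (the paper's "`n > r(A)`"). -/
def BoxLt (A : Fm) (n : ℕ) : Prop := ∀ i, occursBox i A → i < n

/-- The language `L∞`: each box index strictly exceeds all box indices in its scope. -/
inductive Linf : Fm → Prop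
  | atom (k : ℕ) : Linf (.atom k)
  | bot : Linf .bot
  | and {A B : Fm} : Linf A → Linf B → Linf (.and A B)
  | or {A B : Fm} : Linf A → Linf B → Linf (.or A B)
  | imp {A B : Fm} : Linf A → Linf B → Linf (.imp A B)
  | neg {A : Fm} : Linf A → Linf (.neg A)
  | box {A : Fm} (n : ℕ) : Linf A → BoxLt A n → Linf (.box n A)

/-- Boolean evaluation treating atoms and boxed formulas as propositional atoms. -/
def evalWith (v : Fm → Bool) : Fm → Bool
  | .atom k => v (.atom k)
  | .bot => false
  | .and A B => evalWith v A && evalWith v B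
  | .or A B => evalWith v A || evalWith v B
  | .imp A B => !(evalWith v A) || evalWith v B
  | .neg A => !(evalWith v A)
  | .box n A => v (.box n A)

/-- Classical propositional tautologies (on `L∞`-formulas as atoms). -/
def Taut (A : Fm) : Prop := ∀ v, evalWith v A = true

def axH (F : Fm) : Prop := ∃ A n, Linf (Fm.box n A) ∧ F = (Fm.box n A).imp (Fm.box (n+1) A)
def axK (F : Fm) : Prop := ∃ A B n, Linf (Fm.box n (A.imp B)) ∧
    F = (Fm.box n (A.imp B)).imp ((Fm.box n A).imp (Fm.box n B))
def axFour (F : Fm) : Prop := ∃ A n, Linf (Fm.box n A) ∧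
    F = (Fm.box n A).imp (Fm.box (n+1) (Fm.box n A))
def axD (F : Fm) : Prop := ∃ n, F = Fm.neg (Fm.box n Fm.bot)
def axT (F : Fm) : Prop := ∃ A n, Linf (Fm.box n A) ∧ F = (Fm.box n A).imp A
def axL (F : Fm) : Prop := ∃ A n, Linf (Fm.box n A) ∧
    F = (Fm.box (n+1) ((Fm.box n A).imp A)).imp (Fm.box n A)
def axFive (F : Fm) : Prop := ∃ A n, Linf (Fm.box n A) ∧
    F = ((Fm.box n A).neg).imp (Fm.box (n+1) ((Fm.box n A).neg))

/-- Hilbert-style provability over `L∞` from a set of axiom (schema instances):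
    classical tautologies, modus ponens, and necessitation restricted to `n > r(A)`. -/
inductive Prv (Ax : Fm → Prop) : Fm → Prop
  | ax {A : Fm} : Ax A → Prv Ax A
  | taut {A : Fm} : Linf A → Taut A → Prv Ax A
  | mp {A B : Fm} : Prv Ax (A.imp B) → Prv Ax A → Prv Ax B
  | nec {A : Fm} (n : ℕ) : Prv Ax A → BoxLt A n → Prv Ax (Fm.box n A)

def K4hAx (F : Fm) : Prop := axH F ∨ axK F ∨ axFour F
def KD4hAx (F : Fm) : Prop := K4hAx F ∨ axD F
def S4hAx (F : Fm) : Prop := K4hAx F ∨ axT F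
def GLhAx (F : Fm) : Prop := K4hAx F ∨ axL F
def KD45hAx (F : Fm) : Prop := KD4hAx F ∨ axFive F

def K4h : Fm → Prop := Prv K4hAx
def KD4h : Fm → Prop := Prv KD4hAx
def S4h : Fm → Prop := Prv S4hAx
def GLh : Fm → Prop := Prv GLhAx

def conjList (l : List Fm) : Fm := l.foldr Fm.and Fm.top
def disjList (l : List Fm) : Fm := l.foldr Fm.or Fm.bot

/-- `Γ ⊢_L A` : some finite conjunction of members of `Γ` implies `A` in `L`. -/
def Deriv (Ax : Fm → Prop) (Γ : Set Fm) (A : Fm) : Prop :=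
  ∃ l : List Fm, (∀ B ∈ l, B ∈ Γ) ∧ Prv Ax ((conjList l).imp A)

/-! Let `τₙ = Fm.eraseBoxes n` erase every box of index `≥ n`. It maps `S4_h`-theorems to
`S4_h`-theorems and fixes `A` because `n > r(A)`, so `⊢ C → A` gives `⊢ τₙ C → A` and hence
`⊢ □ₙ τₙ C → □ₙ A`. It remains to show `⊢ C → □ₙ τₙ C` conjunct by conjunct: `τₙ (□ₙ B) = B`,
while for `m < n` the formula `□ₘ B` is fixed by `τₙ` and `□ₘ B → □ₙ □ₘ B` follows from `4`
and `H`. -/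

@[simp] theorem linf_and {A B : Fm} : Linf (A.and B) ↔ Linf A ∧ Linf B :=
  ⟨fun | .and hA hB => ⟨hA, hB⟩, fun ⟨hA, hB⟩ => .and hA hB⟩

@[simp] theorem linf_imp {A B : Fm} : Linf (A.imp B) ↔ Linf A ∧ Linf B :=
  ⟨fun | .imp hA hB => ⟨hA, hB⟩, fun ⟨hA, hB⟩ => .imp hA hB⟩

@[simp] theorem linf_box {n : ℕ} {A : Fm} : Linf (Fm.box n A) ↔ Linf A ∧ BoxLt A n :=
  ⟨fun | .box _ hA hn => ⟨hA, hn⟩, fun ⟨hA, hn⟩ => .box n hA hn⟩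

@[simp] theorem linf_top : Linf Fm.top := .neg .bot

@[simp] theorem boxLt_and {A B : Fm} {n : ℕ} : BoxLt (A.and B) n ↔ BoxLt A n ∧ BoxLt B n := by
  simp only [BoxLt, occursBox, or_imp, forall_and]

@[simp] theorem boxLt_imp {A B : Fm} {n : ℕ} : BoxLt (A.imp B) n ↔ BoxLt A n ∧ BoxLt B n := by
  simp only [BoxLt, occursBox, or_imp, forall_and]

@[simp] theorem boxLt_or {A B : Fm} {n : ℕ} : BoxLt (A.or B) n ↔ BoxLt A n ∧ BoxLt B n := by
  simp only [BoxLt, occursBox, or_imp, forall_and]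

@[simp] theorem boxLt_neg {A : Fm} {n : ℕ} : BoxLt A.neg n ↔ BoxLt A n := .rfl

@[simp] theorem boxLt_box {A : Fm} {m n : ℕ} : BoxLt (Fm.box m A) n ↔ m < n ∧ BoxLt A n := by
  simp only [BoxLt, occursBox, or_imp, forall_and, forall_eq]

@[simp] theorem boxLt_top {n : ℕ} : BoxLt Fm.top n := fun _ h => h.elim

theorem BoxLt.mono {A : Fm} {m n : ℕ} (h : BoxLt A m) (hmn : m ≤ n) : BoxLt A n :=
  fun i hi => (h i hi).trans_le hmn

theorem Linf.box_box {A : Fm} {m n : ℕ} (h : Linf (Fm.box m A)) (hmn : m < n) :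
    Linf (Fm.box n (Fm.box m A)) := by
  rw [linf_box] at h
  simp [h, hmn, h.2.mono hmn.le]

theorem linf_conjList {l : List Fm} (h : ∀ B ∈ l, Linf B) : Linf (conjList l) := by
  induction l with
  | nil => exact linf_top
  | cons B l ih => exact .and (h B (by simp)) (ih fun C hC => h C (by simp [hC]))

theorem evalWith_conjList (v : Fm → Bool) (l : List Fm) :
    evalWith v (conjList l) = l.all (evalWith v) := by
  induction l with
  | nil => rfl
  | cons B l ih => simp [conjList, evalWith, ← ih]

namespace Prv

variable {Ax : Fm → Prop} {A X Y Z X' Y' : Fm}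

theorem mono {Ax' : Fm → Prop} (hAx : ∀ F, Ax F → Ax' F) (h : Prv Ax A) : Prv Ax' A := by
  induction h with
  | ax h => exact .ax (hAx _ h)
  | taut hl ht => exact .taut hl ht
  | mp _ _ ih₁ ih₂ => exact .mp ih₁ ih₂
  | nec n _ hn ih => exact .nec n ih hn

theorem linf (hAx : ∀ F, Ax F → Linf F) (h : Prv Ax A) : Linf A := by
  induction h with
  | ax h => exact hAx _ h
  | taut hl _ => exact hl
  | mp _ _ ih _ => exact (linf_imp.1 ih).2
  | nec n _ hn ih => exact .box n ih hn

theorem of_taut_imp (hAx : ∀ F, Ax F → Linf F) (hT : Taut (X.imp Y)) (hY : Linf Y)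
    (hX : Prv Ax X) : Prv Ax Y :=
  .mp (.taut (.imp (hX.linf hAx) hY) hT) hX

theorem of_taut_imp₂ (hAx : ∀ F, Ax F → Linf F) (hT : Taut (X.imp (Y.imp Z))) (hZ : Linf Z)
    (hX : Prv Ax X) (hY : Prv Ax Y) : Prv Ax Z :=
  .mp (.mp (.taut (.imp (hX.linf hAx) (.imp (hY.linf hAx) hZ)) hT) hX) hY

theorem imp_refl (hX : Linf X) : Prv Ax (X.imp X) :=
  .taut (.imp hX hX) fun v => by simp [evalWith]

theorem imp_of_prv (hAx : ∀ F, Ax F → Linf F) (hX : Linf X) (h : Prv Ax Y) :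
    Prv Ax (X.imp Y) :=
  h.of_taut_imp hAx (fun v => by simp only [evalWith]; cases evalWith v Y <;> simp)
    (.imp hX (h.linf hAx))

theorem imp_trans (hAx : ∀ F, Ax F → Linf F) (h₁ : Prv Ax (X.imp Y)) (h₂ : Prv Ax (Y.imp Z)) :
    Prv Ax (X.imp Z) := by
  have hXY := linf_imp.1 (h₁.linf hAx)
  have hYZ := linf_imp.1 (h₂.linf hAx)
  refine of_taut_imp₂ hAx (fun v => ?_) (.imp hXY.1 hYZ.2) h₁ h₂
  simp only [evalWith]
  cases evalWith v X <;> cases evalWith v Y <;> simp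

theorem and_imp_and (hAx : ∀ F, Ax F → Linf F) (h₁ : Prv Ax (X.imp X'))
    (h₂ : Prv Ax (Y.imp Y')) : Prv Ax ((X.and Y).imp (X'.and Y')) := by
  have hXX := linf_imp.1 (h₁.linf hAx)
  have hYY := linf_imp.1 (h₂.linf hAx)
  refine of_taut_imp₂ hAx (fun v => ?_) (by simp [hXX, hYY]) h₁ h₂
  simp only [evalWith]
  cases evalWith v X <;> cases evalWith v Y <;> cases evalWith v X' <;> cases evalWith v Y' <;>
    rfl

theorem uncurry (hAx : ∀ F, Ax F → Linf F) (h : Prv Ax (X.imp (Y.imp Z))) :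
    Prv Ax ((X.and Y).imp Z) := by
  refine h.of_taut_imp hAx (fun v => ?_) (by simpa [and_assoc] using h.linf hAx)
  simp only [evalWith]
  cases evalWith v X <;> cases evalWith v Y <;> simp

end Prv

theorem deriv_singleton_iff {Ax : Fm → Prop} (hAx : ∀ F, Ax F → Linf F) {C A : Fm}
    (hC : Linf C) : Deriv Ax {C} A ↔ Prv Ax (C.imp A) := by
  constructor
  · rintro ⟨l, hl, h⟩
    refine (Prv.taut ?_ fun v => ?_).imp_trans hAx h
    · exact .imp hC (linf_imp.1 (h.linf hAx)).1
    · simp only [evalWith, evalWith_conjList]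
      cases hv : evalWith v C
      · rfl
      · simpa using fun B hB => (hl B hB : B = C) ▸ hv
  · intro h
    refine ⟨[C], by simp, (Prv.taut ?_ fun v => ?_).imp_trans hAx h⟩
    · simp [conjList, hC]
    · simp only [conjList, List.foldr, evalWith, Fm.top]
      cases evalWith v C <;> rfl

theorem K4hAx.linf : ∀ F, K4hAx F → Linf F := by
  rintro _ (⟨A, n, h, rfl⟩ | ⟨A, B, n, h, rfl⟩ | ⟨A, n, h, rfl⟩) <;> rw [linf_box] at h
  · simp [h, h.2.mono n.le_succ]
  · simp_all
  · simp [h, h.2.mono n.le_succ]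

theorem S4hAx.linf : ∀ F, S4hAx F → Linf F := by
  rintro _ (h | ⟨A, n, h, rfl⟩)
  · exact K4hAx.linf _ h
  · simp_all

theorem Prv.box_imp_box {Ax : Fm → Prop} (hAx : ∀ F, Ax F → Linf F) (hK : ∀ F, axK F → Ax F)
    {X Y : Fm} {n : ℕ} (h : Prv Ax (X.imp Y)) (hX : BoxLt X n) (hY : BoxLt Y n) :
    Prv Ax ((Fm.box n X).imp (Fm.box n Y)) :=
  .mp (.ax (hK _ ⟨X, Y, n, .box n (h.linf hAx) (boxLt_imp.2 ⟨hX, hY⟩), rfl⟩))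
    (.nec n h (boxLt_imp.2 ⟨hX, hY⟩))

theorem prv_box_and_box_imp_box_and {P Q : Fm} {n : ℕ} (hP : Linf (Fm.box n P))
    (hQ : Linf (Fm.box n Q)) :
    Prv K4hAx (((Fm.box n P).and (Fm.box n Q)).imp (Fm.box n (P.and Q))) := by
  rw [linf_box] at hP hQ
  have hpair : Prv K4hAx (P.imp (Q.imp (P.and Q))) :=
    .taut (by simp [hP, hQ]) fun v => by
      simp only [evalWith]; cases evalWith v P <;> cases evalWith v Q <;> rfl
  have hK : ∀ F, axK F → K4hAx F := fun _ h => .inr (.inl h)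
  refine Prv.uncurry K4hAx.linf ?_
  refine (hpair.box_imp_box K4hAx.linf hK hP.2 (by simp [hP, hQ])).imp_trans
    K4hAx.linf (.ax (hK _ ⟨Q, P.and Q, n, by simp [hP, hQ], rfl⟩))

theorem prv_box_imp_box_box {B : Fm} {m k : ℕ} (hB : Linf (Fm.box m B)) (hmk : m < k) :
    Prv K4hAx ((Fm.box m B).imp (Fm.box k (Fm.box m B))) := by
  induction k, hmk using Nat.le_induction with
  | base => exact .ax (.inr (.inr ⟨B, m, hB, rfl⟩))
  | succ k hmk ih =>
    exact ih.imp_trans K4hAx.linf (.ax (.inl ⟨_, k, hB.box_box hmk, rfl⟩))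

def Fm.eraseBoxes (n : ℕ) : Fm → Fm
  | .atom k => .atom k
  | .bot => .bot
  | .and A B => .and (A.eraseBoxes n) (B.eraseBoxes n)
  | .or A B => .or (A.eraseBoxes n) (B.eraseBoxes n)
  | .imp A B => .imp (A.eraseBoxes n) (B.eraseBoxes n)
  | .neg A => .neg (A.eraseBoxes n)
  | .box m A => if n ≤ m then A.eraseBoxes n else .box m (A.eraseBoxes n)

namespace Fm

variable {i k n : ℕ} {B : Fm}

theorem occursBox_eraseBoxes (h : occursBox i (B.eraseBoxes n)) : i < n ∧ occursBox i B := by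
  induction B with
  | atom | bot => exact h.elim
  | and _ _ ih₁ ih₂ | or _ _ ih₁ ih₂ | imp _ _ ih₁ ih₂ =>
    rcases h with h | h
    · exact ⟨(ih₁ h).1, .inl (ih₁ h).2⟩
    · exact ⟨(ih₂ h).1, .inr (ih₂ h).2⟩
  | neg _ ih => exact ih h
  | box m A ih =>
    unfold eraseBoxes at h
    split_ifs at h with hnm
    · exact ⟨(ih h).1, .inr (ih h).2⟩
    · rcases h with rfl | h
      · exact ⟨Nat.lt_of_not_le hnm, .inl rfl⟩
      · exact ⟨(ih h).1, .inr (ih h).2⟩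

theorem boxLt_eraseBoxes (B : Fm) (n : ℕ) : BoxLt (B.eraseBoxes n) n :=
  fun _ h => (occursBox_eraseBoxes h).1

theorem _root_.BoxLt.eraseBoxes (h : BoxLt B k) (n : ℕ) : BoxLt (B.eraseBoxes n) k :=
  fun i hi => h i (occursBox_eraseBoxes hi).2

theorem eraseBoxes_eq_self (h : BoxLt B n) : B.eraseBoxes n = B := by
  induction B with
  | atom | bot => rfl
  | and _ _ ih₁ ih₂ | or _ _ ih₁ ih₂ | imp _ _ ih₁ ih₂ =>
    simp_all [eraseBoxes]
  | neg _ ih => simp_all [eraseBoxes]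
  | box m A ih =>
    rw [boxLt_box] at h
    simp [eraseBoxes, h.1, ih h.2]

theorem _root_.Linf.eraseBoxes (h : Linf B) (n : ℕ) : Linf (B.eraseBoxes n) := by
  induction h with
  | atom k => exact .atom k
  | bot => exact .bot
  | and _ _ ih₁ ih₂ => exact .and ih₁ ih₂
  | or _ _ ih₁ ih₂ => exact .or ih₁ ih₂
  | imp _ _ ih₁ ih₂ => exact .imp ih₁ ih₂
  | neg _ ih => exact .neg ih
  | box m _ hm ih =>
    unfold Fm.eraseBoxes
    split_ifs
    · exact ih
    · exact .box m ih (hm.eraseBoxes n)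

theorem evalWith_eraseBoxes (v : Fm → Bool) (n : ℕ) (B : Fm) :
    evalWith v (B.eraseBoxes n) = evalWith (fun X => evalWith v (X.eraseBoxes n)) B := by
  induction B with
  | atom | bot | box => rfl
  | and _ _ ih₁ ih₂ | or _ _ ih₁ ih₂ | imp _ _ ih₁ ih₂ =>
    simp [eraseBoxes, evalWith, ih₁, ih₂]
  | neg _ ih => simp [eraseBoxes, evalWith, ih]

theorem _root_.Taut.eraseBoxes (h : Taut B) (n : ℕ) : Taut (B.eraseBoxes n) :=
  fun v => (evalWith_eraseBoxes v n B).trans (h _)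

end Fm

theorem Linf.box_eraseBoxes {B : Fm} {k : ℕ} (h : Linf (Fm.box k B)) (n : ℕ) :
    Linf (Fm.box k (B.eraseBoxes n)) := by
  rw [linf_box] at h ⊢
  exact ⟨h.1.eraseBoxes n, h.2.eraseBoxes n⟩

/-- Erasing the boxes of index `≥ n` turns an instance of `H`, `4` or `T` into an instance of
`H`, `T` or `p → p`; this is where `T` is needed. -/
theorem S4hAx.prv_eraseBoxes {F : Fm} (hF : S4hAx F) (n : ℕ) : Prv S4hAx (F.eraseBoxes n) := by
  rcases hF with (⟨B, k, h, rfl⟩ | ⟨B, C, k, h, rfl⟩ | ⟨B, k, h, rfl⟩) | ⟨B, k, h, rfl⟩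
  · simp only [Fm.eraseBoxes]
    split_ifs
    · exact .imp_refl ((linf_box.1 h).1.eraseBoxes n)
    · omega
    · exact .ax (.inr ⟨_, k, h.box_eraseBoxes n, rfl⟩)
    · exact .ax (.inl (.inl ⟨_, k, h.box_eraseBoxes n, rfl⟩))
  · simp only [Fm.eraseBoxes]
    split_ifs
    · exact .imp_refl ((linf_box.1 h).1.eraseBoxes n)
    · exact .ax (.inl (.inr (.inl ⟨_, _, k, h.box_eraseBoxes n, rfl⟩)))
  · simp only [Fm.eraseBoxes]
    split_ifs
    · exact .imp_refl ((linf_box.1 h).1.eraseBoxes n)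
    · omega
    · exact .imp_refl (h.box_eraseBoxes n)
    · exact .ax (.inl (.inr (.inr ⟨_, k, h.box_eraseBoxes n, rfl⟩)))
  · simp only [Fm.eraseBoxes]
    split_ifs
    · exact .imp_refl ((linf_box.1 h).1.eraseBoxes n)
    · exact .ax (.inr ⟨_, k, h.box_eraseBoxes n, rfl⟩)

theorem Prv.eraseBoxes {D : Fm} (h : Prv S4hAx D) (n : ℕ) : Prv S4hAx (D.eraseBoxes n) := by
  induction h with
  | ax h => exact h.prv_eraseBoxes n
  | taut hl ht => exact .taut (hl.eraseBoxes n) (ht.eraseBoxes n)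
  | mp _ _ ih₁ ih₂ => exact .mp ih₁ ih₂
  | nec k _ hk ih =>
    unfold Fm.eraseBoxes
    split_ifs
    · exact ih
    · exact .nec k ih (hk.eraseBoxes n)

theorem prv_box_imp_box_eraseBoxes {B : Fm} {m n : ℕ} (hB : Linf (Fm.box m B)) (hmn : m ≤ n) :
    Prv K4hAx ((Fm.box m B).imp (Fm.box n ((Fm.box m B).eraseBoxes n))) := by
  have hBm := (linf_box.1 hB).2
  rcases hmn.eq_or_lt with rfl | hlt
  · rw [Fm.eraseBoxes, if_pos le_rfl, Fm.eraseBoxes_eq_self hBm]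
    exact .imp_refl hB
  · rw [Fm.eraseBoxes_eq_self (boxLt_box.2 ⟨hlt, hBm.mono hlt.le⟩)]
    exact prv_box_imp_box_box hB hlt

theorem Prv.and_imp_box_eraseBoxes {X Y : Fm} {n : ℕ}
    (hX : Prv K4hAx (X.imp (Fm.box n (X.eraseBoxes n))))
    (hY : Prv K4hAx (Y.imp (Fm.box n (Y.eraseBoxes n)))) :
    Prv K4hAx ((X.and Y).imp (Fm.box n ((X.and Y).eraseBoxes n))) :=
  (hX.and_imp_and K4hAx.linf hY).imp_trans K4hAx.linf <|
    prv_box_and_box_imp_box_and (linf_imp.1 (hX.linf K4hAx.linf)).2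
      (linf_imp.1 (hY.linf K4hAx.linf)).2

theorem prv_conjList_imp_box_eraseBoxes {L : List (ℕ × Fm)} {n : ℕ}
    (hL : ∀ p ∈ L, Linf (Fm.box p.1 p.2)) (hm : ∀ p ∈ L, p.1 ≤ n) :
    Prv K4hAx ((conjList (L.map fun p => Fm.box p.1 p.2)).imp
      (Fm.box n ((conjList (L.map fun p => Fm.box p.1 p.2)).eraseBoxes n))) := by
  induction L with
  | nil =>
    exact .imp_of_prv K4hAx.linf linf_top (.nec n (.taut linf_top fun _ => rfl) boxLt_top)
  | cons p L ih =>
    simp only [List.forall_mem_cons] at hL hm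
    exact (prv_box_imp_box_eraseBoxes hL.1 hm.1).and_imp_box_eraseBoxes (ih hL.2 hm.2)

theorem S4h_strong_necessitation_general (L : List (ℕ × Fm)) (n : ℕ) (A : Fm)
    (hL : ∀ p ∈ L, Linf (Fm.box p.1 p.2))
    (hm : ∀ p ∈ L, p.1 ≤ n)
    (hn : BoxLt A n)
    (h : Deriv S4hAx {conjList (L.map fun p => Fm.box p.1 p.2)} A) :
    Deriv S4hAx {conjList (L.map fun p => Fm.box p.1 p.2)} (Fm.box n A) := by
  set C := conjList (L.map fun p => Fm.box p.1 p.2)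
  have hC : Linf C := linf_conjList (by simpa only [List.forall_mem_map] using hL)
  rw [deriv_singleton_iff S4hAx.linf hC] at h ⊢
  have hCA : Prv S4hAx ((C.eraseBoxes n).imp A) := by
    simpa only [Fm.eraseBoxes, Fm.eraseBoxes_eq_self hn] using h.eraseBoxes n
  have hlift : Prv S4hAx (C.imp (Fm.box n (C.eraseBoxes n))) :=
    (prv_conjList_imp_box_eraseBoxes hL hm).mono fun _ => .inl
  exact hlift.imp_trans S4hAx.linf <|
    hCA.box_imp_box S4hAx.linf (fun _ h => .inl (.inr (.inl h))) (Fm.boxLt_eraseBoxes C n) hn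

/-- strong necessitation for `S4_h`. -/
theorem S4h_strong_necessitation (L : List (ℕ × Fm)) (n : ℕ) (A : Fm)
    (hL : ∀ p ∈ L, Linf (Fm.box p.1 p.2))
    (hm : ∀ p ∈ L, p.1 ≤ n)
    (hA : Linf A) (hn : BoxLt A n)
    (h : Deriv S4hAx {conjList (L.map fun p => Fm.box p.1 p.2)} A) :
    Deriv S4hAx {conjList (L.map fun p => Fm.box p.1 p.2)} (Fm.box n A) :=
  S4h_strong_necessitation_general L n A hL hm hn h
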